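/- Let d ≥ 1 and c > 0 be constants, and for each N let G_N be a connected d-regular simple graph on N vertices with Cheeger constant h(G_N) ≥ c, with Laplacian eigenvalues 0 = λ₁ ≤ λ₂(N) ≤ … ≤ λ_N(N), and let L̄_N be the grounded Laplacian obtained by deleting the row and column of some vertex v_N, with eigenvalues λ̄₁(N) ≤ … ≤ λ̄_{N−1}(N). Then there exists a network size N̄ such that for all N > N̄ the eigenratios satisfy λ₂(N)/λ_N(N) > λ̄₁(N)/λ̄_{N−1}(N). -/

import Mathlib

open Matrix

/-- The `k`-th smallest eigenvalue (0-indexed, counted with multiplicity) of a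
real Hermitian (symmetric) matrix; junk value `0` if `M` is not Hermitian or
`k` is out of range. -/
noncomputable def eigVal {n : Type*} [Fintype n] [DecidableEq n]
    (M : Matrix n n ℝ) (k : ℕ) : ℝ := by
  classical
  exact if h : M.IsHermitian ∧ k < Fintype.card n then
    (h.1.eigenvalues₀ ∘ Tuple.sort h.1.eigenvalues₀) ⟨k, h.2⟩
  else 0

/-- The grounded matrix obtained from `M` by deleting the row and the column
indexed by the vertex `v`. -/
def ground {N : ℕ} (M : Matrix (Fin N) (Fin N) ℝ) (v : Fin N) :
    Matrix {i : Fin N // i ≠ v} {i : Fin N // i ≠ v} ℝ :=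
  M.submatrix (fun i => i.1) (fun i => i.1)

/-- The (real) Laplacian matrix of a simple graph. -/
noncomputable def lap {N : ℕ} (G : SimpleGraph (Fin N)) : Matrix (Fin N) (Fin N) ℝ := by
  classical
  exact G.lapMatrix ℝ

/-- The degree of the vertex `v` in `G`. -/
noncomputable def deg {N : ℕ} (G : SimpleGraph (Fin N)) (v : Fin N) : ℕ := by
  classical
  exact (Finset.univ.filter fun u => G.Adj v u).card

/-- The Cheeger (isoperimetric) constant of a graph: the infimum of
`|∂X|/|X|` over nonempty vertex sets `X` with `|X| ≤ N/2`, where `∂X` is the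
set of edges with exactly one endpoint in `X`. -/
noncomputable def cheeger {N : ℕ} (G : SimpleGraph (Fin N)) : ℝ := by
  classical
  exact sInf {r : ℝ | ∃ X : Finset (Fin N), X.Nonempty ∧ (X.card : ℝ) ≤ (N : ℝ) / 2 ∧
    r = ((Finset.univ.filter fun p : Fin N × Fin N =>
      G.Adj p.1 p.2 ∧ p.1 ∈ X ∧ p.2 ∉ X).card : ℝ) / X.card}


open Finset
open scoped RealInnerProductSpace
set_option linter.unusedSectionVars false
set_option maxHeartbeats 1000000

section spec
variable {n : Type*} [Fintype n] [DecidableEq n] {M : Matrix n n ℝ}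

/-- eigenvector as plain function -/
noncomputable def evec (hM : M.IsHermitian) (i : n) : n → ℝ := hM.eigenvectorBasis i

lemma inner_eq_dot (u v : EuclideanSpace ℝ n) : ⟪u, v⟫ = (u : n → ℝ) ⬝ᵥ v := by
  simp [PiLp.inner_apply, dotProduct, mul_comm]

lemma dot_sym (hM : M.IsHermitian) (u v : n → ℝ) : u ⬝ᵥ (M *ᵥ v) = (M *ᵥ u) ⬝ᵥ v := by
  rw [dotProduct_mulVec, ← mulVec_transpose]
  congr 1
  rw [← conjTranspose_eq_transpose_of_trivial, hM]

lemma mulVec_evec (hM : M.IsHermitian) (i : n) :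
    M *ᵥ evec hM i = hM.eigenvalues i • evec hM i := hM.mulVec_eigenvectorBasis i

lemma evec_dot (hM : M.IsHermitian) (i : n) (x : n → ℝ) :
    evec hM i ⬝ᵥ (M *ᵥ x) = hM.eigenvalues i * (evec hM i ⬝ᵥ x) := by
  rw [dot_sym hM, mulVec_evec hM, smul_dotProduct]; rfl

lemma parseval (hM : M.IsHermitian) (x : n → ℝ) :
    x ⬝ᵥ x = ∑ i : n, (evec hM i ⬝ᵥ x)^2 := by
  have h2 := OrthonormalBasis.sum_inner_mul_inner hM.eigenvectorBasis
    (WithLp.toLp 2 x : EuclideanSpace ℝ n) (WithLp.toLp 2 x : EuclideanSpace ℝ n)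
  rw [inner_eq_dot] at h2
  rw [← h2]
  congr 1; ext i
  rw [inner_eq_dot, inner_eq_dot, sq]
  exact congrArg (· * _) (dotProduct_comm _ _)

lemma qform_decomp (hM : M.IsHermitian) (x : n → ℝ) :
    x ⬝ᵥ (M *ᵥ x) = ∑ i : n, hM.eigenvalues i * (evec hM i ⬝ᵥ x)^2 := by
  have h2 := OrthonormalBasis.sum_inner_mul_inner hM.eigenvectorBasis
    (WithLp.toLp 2 x : EuclideanSpace ℝ n) (WithLp.toLp 2 (M *ᵥ x : n → ℝ) : EuclideanSpace ℝ n)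
  rw [inner_eq_dot] at h2
  rw [← h2]
  congr 1; ext i
  rw [inner_eq_dot, inner_eq_dot]
  rw [show (hM.eigenvectorBasis i : n → ℝ) ⬝ᵥ (M *ᵥ x) = hM.eigenvalues i * (evec hM i ⬝ᵥ x)
    from evec_dot hM i x]
  rw [show ((WithLp.toLp 2 x : EuclideanSpace ℝ n) : n → ℝ) ⬝ᵥ (hM.eigenvectorBasis i : n → ℝ)
    = evec hM i ⬝ᵥ x from dotProduct_comm _ _]
  ring

lemma evec_dot_self (hM : M.IsHermitian) (i : n) : evec hM i ⬝ᵥ evec hM i = 1 := by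
  have h := hM.eigenvectorBasis.orthonormal.1 i
  have h2 : ⟪hM.eigenvectorBasis i, hM.eigenvectorBasis i⟫ = (1:ℝ) := by
    rw [real_inner_self_eq_norm_sq, h]; norm_num
  rw [inner_eq_dot] at h2
  exact h2

lemma evec_dot_ne (hM : M.IsHermitian) {i j : n} (h : i ≠ j) :
    evec hM i ⬝ᵥ evec hM j = 0 := by
  have h2 : ⟪(hM.eigenvectorBasis i : EuclideanSpace ℝ n), hM.eigenvectorBasis j⟫ = (0:ℝ) :=
    hM.eigenvectorBasis.orthonormal.2 h
  rw [inner_eq_dot] at h2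
  exact h2

end spec

section spec2
variable {n : Type*} [Fintype n] [DecidableEq n] {M : Matrix n n ℝ}

lemma eigVal_eq (hM : M.IsHermitian) {k : ℕ} (hk : k < Fintype.card n) :
    eigVal M k = hM.eigenvalues₀ (Tuple.sort hM.eigenvalues₀ ⟨k, hk⟩) := by
  rw [eigVal, dif_pos ⟨hM, hk⟩]; rfl

lemma eigVal_mono (hM : M.IsHermitian) {k l : ℕ} (hkl : k ≤ l) (hl : l < Fintype.card n) :
    eigVal M k ≤ eigVal M l := by
  rw [eigVal_eq hM (lt_of_le_of_lt hkl hl), eigVal_eq hM hl]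
  exact Tuple.monotone_sort hM.eigenvalues₀ (by exact_mod_cast hkl)

/-- the index (in n) of the k-th sorted eigenvalue -/
noncomputable def eigIdx (hM : M.IsHermitian) (k : Fin (Fintype.card n)) : n :=
  (Fintype.equivOfCardEq (Fintype.card_fin _)) (Tuple.sort hM.eigenvalues₀ k)

lemma eigIdx_inj (hM : M.IsHermitian) : Function.Injective (eigIdx hM) := by
  intro a b hab
  exact (Tuple.sort hM.eigenvalues₀).injective
    ((Fintype.equivOfCardEq (Fintype.card_fin _)).injective hab)

lemma eigVal_eq_eigenvalues (hM : M.IsHermitian) {k : ℕ} (hk : k < Fintype.card n) :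
    eigVal M k = hM.eigenvalues (eigIdx hM ⟨k, hk⟩) := by
  rw [eigVal_eq hM hk, Matrix.IsHermitian.eigenvalues, eigIdx, Equiv.symm_apply_apply]

lemma eigVal_le_eigenvalues (hM : M.IsHermitian) (h0 : 0 < Fintype.card n) (i : n) :
    eigVal M 0 ≤ hM.eigenvalues i := by
  have : hM.eigenvalues i = hM.eigenvalues₀
    (Tuple.sort hM.eigenvalues₀ ((Tuple.sort hM.eigenvalues₀).symm
      ((Fintype.equivOfCardEq (Fintype.card_fin _)).symm i))) := by
    rw [Equiv.apply_symm_apply]; rfl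
  rw [this, eigVal_eq hM h0]
  exact Tuple.monotone_sort hM.eigenvalues₀ (Fin.le_def.mpr (Nat.zero_le _))

lemma eigenvalues_le_eigVal (hM : M.IsHermitian) (h0 : 0 < Fintype.card n) (i : n) :
    hM.eigenvalues i ≤ eigVal M (Fintype.card n - 1) := by
  have : hM.eigenvalues i = hM.eigenvalues₀
    (Tuple.sort hM.eigenvalues₀ ((Tuple.sort hM.eigenvalues₀).symm
      ((Fintype.equivOfCardEq (Fintype.card_fin _)).symm i))) := by
    rw [Equiv.apply_symm_apply]; rfl
  rw [this, eigVal_eq hM (Nat.sub_lt h0 one_pos)]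
  apply Tuple.monotone_sort hM.eigenvalues₀
  exact Fin.le_def.mpr (Nat.le_sub_one_of_lt (Fin.is_lt _))

end spec2


section spec3
variable {n : Type*} [Fintype n] [DecidableEq n] {M : Matrix n n ℝ}

noncomputable def sevec (hM : M.IsHermitian) (k : Fin (Fintype.card n)) : n → ℝ :=
  evec hM (eigIdx hM k)

lemma eigVal_min_rayleigh (hM : M.IsHermitian) (h0 : 0 < Fintype.card n) (x : n → ℝ) :
    eigVal M 0 * (x ⬝ᵥ x) ≤ x ⬝ᵥ (M *ᵥ x) := by
  rw [qform_decomp hM, parseval hM, Finset.mul_sum]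
  apply Finset.sum_le_sum
  intro i _
  exact mul_le_mul_of_nonneg_right (eigVal_le_eigenvalues hM h0 i) (sq_nonneg _)

lemma eigVal_max_rayleigh (hM : M.IsHermitian) (h0 : 0 < Fintype.card n) (x : n → ℝ) :
    x ⬝ᵥ (M *ᵥ x) ≤ eigVal M (Fintype.card n - 1) * (x ⬝ᵥ x) := by
  rw [qform_decomp hM, parseval hM, Finset.mul_sum]
  apply Finset.sum_le_sum
  intro i _
  exact mul_le_mul_of_nonneg_right (eigenvalues_le_eigVal hM h0 i) (sq_nonneg _)

lemma mulVec_sevec (hM : M.IsHermitian) {k : ℕ} (hk : k < Fintype.card n) :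
    M *ᵥ sevec hM ⟨k, hk⟩ = eigVal M k • sevec hM ⟨k, hk⟩ := by
  rw [sevec, mulVec_evec hM, eigVal_eq_eigenvalues hM hk]

lemma sevec_dot_self (hM : M.IsHermitian) (k : Fin (Fintype.card n)) :
    sevec hM k ⬝ᵥ sevec hM k = 1 := evec_dot_self hM _

lemma sevec_dot_ne (hM : M.IsHermitian) {k l : Fin (Fintype.card n)} (h : k ≠ l) :
    sevec hM k ⬝ᵥ sevec hM l = 0 :=
  evec_dot_ne hM (fun hc => h (eigIdx_inj hM hc))

lemma eigVal_eq_rayleigh (hM : M.IsHermitian) {k : ℕ} (hk : k < Fintype.card n) :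
    eigVal M k = sevec hM ⟨k, hk⟩ ⬝ᵥ (M *ᵥ sevec hM ⟨k, hk⟩) := by
  rw [mulVec_sevec hM hk, dotProduct_smul, sevec_dot_self hM]
  simp

end spec3

section coarea
variable {N : ℕ} {G : SimpleGraph (Fin N)} [DecidableRel G.Adj] {c : ℝ}

/-- boundary count of X : number of ordered adjacent pairs leaving X -/
def bCount (G : SimpleGraph (Fin N)) [DecidableRel G.Adj] (X : Finset (Fin N)) : ℕ :=
  (univ.filter fun p : Fin N × Fin N => G.Adj p.1 p.2 ∧ p.1 ∈ X ∧ p.2 ∉ X).card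

lemma coarea (hN : 0 < N)
    (hc : ∀ X : Finset (Fin N), X.Nonempty → (X.card : ℝ) ≤ (N : ℝ)/2 →
      c * X.card ≤ (bCount G X : ℝ))
    (z : Fin N → ℝ) (hz0 : ∀ i, 0 ≤ z i)
    (hsupp : ((univ.filter fun i => 0 < z i).card : ℝ) ≤ (N : ℝ)/2) :
    2 * c * (∑ i, z i) ≤ ∑ i, ∑ j, if G.Adj i j then |z i - z j| else 0 := by
  classical
  set τ : Equiv.Perm (Fin N) := Tuple.sort (fun i => -z i) with hτ
  have hmono : Monotone ((fun i => -z i) ∘ τ) := Tuple.monotone_sort _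
  set s : ℕ → ℝ := fun j => if h : j < N then z (τ ⟨j, h⟩) else 0 with hs
  have s_apply : ∀ {j} (h : j < N), s j = z (τ ⟨j, h⟩) := by
    intro j h; simp only [hs, dif_pos h]
  have s_nonneg : ∀ j, 0 ≤ s j := by
    intro j; by_cases h : j < N
    · rw [s_apply h]; exact hz0 _
    · simp [hs, h]
  have s_anti : ∀ {j k : ℕ}, j ≤ k → s k ≤ s j := by
    intro j k hjk
    by_cases hk : k < N
    · have hj : j < N := lt_of_le_of_lt hjk hk
      rw [s_apply hj, s_apply hk]
      have := hmono (show (⟨j, hj⟩ : Fin N) ≤ ⟨k, hk⟩ from Fin.mk_le_mk.mpr hjk)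
      simpa using this
    · have : s k = 0 := by simp [hs, hk]
      rw [this]; exact s_nonneg j
  -- rank
  set r : Fin N → ℕ := fun u => (τ.symm u : ℕ) with hrdef
  have hrlt : ∀ u, r u < N := fun u => (τ.symm u).isLt
  have z_eq : ∀ u, z u = s (r u) := by
    intro u
    rw [s_apply (hrlt u)]
    congr 1
    simp [hrdef]
  -- level sets
  set Sj : ℕ → Finset (Fin N) := fun j => univ.filter fun u => r u ≤ j with hSj
  have mem_Sj : ∀ {u j}, u ∈ Sj j ↔ r u ≤ j := by
    intro u j; simp [hSj]
  have card_Sj : ∀ {j}, j < N → (Sj j).card = j + 1 := by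
    intro j hj
    have e1 : Sj j = Finset.map τ.toEmbedding
        ((Finset.range (j+1)).attachFin
          (fun m hm => by have := Finset.mem_range.mp hm; omega)) := by
      ext u
      simp only [Finset.mem_map, Finset.mem_attachFin, Finset.mem_range_succ_iff,
        Equiv.toEmbedding_apply, mem_Sj]
      constructor
      · intro h
        exact ⟨τ.symm u, h, by simp⟩
      · rintro ⟨a, ha, rfl⟩
        simpa [hrdef] using ha
    rw [e1, Finset.card_map, Finset.card_attachFin, Finset.card_range]
  -- pointwise coarea identity
  have pointwise : ∀ u v : Fin N,
      |z u - z v| = ∑ k ∈ Finset.range N,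
        (s k - s (k+1)) * (if (r u ≤ k ↔ r v ≤ k) then 0 else 1) := by
    have main : ∀ u v : Fin N, r u ≤ r v →
        |z u - z v| = ∑ k ∈ Finset.range N,
          (s k - s (k+1)) * (if (r u ≤ k ↔ r v ≤ k) then 0 else 1) := by
      intro u v huv
      have h1 : |z u - z v| = s (r u) - s (r v) := by
        rw [z_eq u, z_eq v, abs_of_nonneg (by linarith [s_anti huv])]
      have h2 : ∀ k ∈ Finset.range N,
          (s k - s (k+1)) * (if (r u ≤ k ↔ r v ≤ k) then 0 else 1)
          = if k ∈ Finset.Ico (r u) (r v) then s k - s (k+1) else 0 := by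
        intro k _
        by_cases hio : r u ≤ k ∧ k < r v
        · rw [if_neg (fun h => absurd (h.mp hio.1) (by omega)),
            if_pos (Finset.mem_Ico.mpr hio), mul_one]
        · rw [if_pos (by constructor <;> intro <;> omega),
            if_neg (fun h => hio (Finset.mem_Ico.mp h)), mul_zero]
      rw [Finset.sum_congr rfl h2, Finset.sum_ite_mem,
        Finset.inter_eq_right.mpr (by
          intro k hk
          rw [Finset.mem_Ico] at hk
          exact Finset.mem_range.mpr (lt_of_lt_of_le hk.2 (le_of_lt (hrlt v)))),
        Finset.sum_Ico_eq_sub _ huv, Finset.sum_range_sub' s, Finset.sum_range_sub' s, h1]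
      ring
    intro u v
    rcases le_total (r u) (r v) with h | h
    · exact main u v h
    · rw [abs_sub_comm]
      rw [main v u h]
      apply Finset.sum_congr rfl
      intro k _
      by_cases hk : r v ≤ k ↔ r u ≤ k
      · rw [if_pos hk, if_pos (Iff.comm.mp hk)]
      · rw [if_neg hk, if_neg (fun hh => hk (Iff.comm.mp hh))]
  -- edge set
  set E : Finset (Fin N × Fin N) := univ.filter (fun p => G.Adj p.1 p.2) with hE
  have lhs_eq : (∑ i, ∑ j, if G.Adj i j then |z i - z j| else 0)
      = ∑ p ∈ E, |z p.1 - z p.2| := by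
    rw [hE, Finset.sum_filter, ← Finset.sum_product', Finset.univ_product_univ]
  -- total
  have total : ∑ p ∈ E, |z p.1 - z p.2|
      = ∑ k ∈ Finset.range N, (s k - s (k+1)) * ((E.filter
          (fun p => ¬ (r p.1 ≤ k ↔ r p.2 ≤ k))).card : ℝ) := by
    have : ∀ p ∈ E, |z p.1 - z p.2| = ∑ k ∈ Finset.range N,
        (s k - s (k+1)) * (if (r p.1 ≤ k ↔ r p.2 ≤ k) then 0 else 1) :=
      fun p _ => pointwise p.1 p.2
    rw [Finset.sum_congr rfl this, Finset.sum_comm]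
    apply Finset.sum_congr rfl
    intro k _
    rw [← Finset.mul_sum]
    congr 1
    rw [Finset.sum_ite, Finset.sum_const, Finset.sum_const]
    simp [Finset.filter_not]
  -- crossing count is twice the boundary count
  have cross_eq : ∀ k : ℕ, (E.filter (fun p => ¬ (r p.1 ≤ k ↔ r p.2 ≤ k))).card
      = 2 * bCount G (Sj k) := by
    intro k
    have hsplit : E.filter (fun p => ¬ (r p.1 ≤ k ↔ r p.2 ≤ k))
        = (E.filter (fun p => p.1 ∈ Sj k ∧ p.2 ∉ Sj k))
          ∪ (E.filter (fun p => p.1 ∉ Sj k ∧ p.2 ∈ Sj k)) := by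
      rw [← Finset.filter_or]
      apply Finset.filter_congr
      intro p _
      simp only [mem_Sj]
      constructor
      · intro h; by_cases h1 : r p.1 ≤ k
        · exact Or.inl ⟨h1, fun h2 => h ⟨fun _ => h2, fun _ => h1⟩⟩
        · exact Or.inr ⟨h1, by by_cases h2 : r p.2 ≤ k
                               · exact h2
                               · exact absurd ⟨fun a => absurd a h1, fun a => absurd a h2⟩ h⟩
      · rintro (⟨h1, h2⟩ | ⟨h1, h2⟩) hiff
        · exact h2 (hiff.mp h1)
        · exact h1 (hiff.mpr h2)
    have hdisj : Disjoint (E.filter (fun p => p.1 ∈ Sj k ∧ p.2 ∉ Sj k))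
        (E.filter (fun p => p.1 ∉ Sj k ∧ p.2 ∈ Sj k)) := by
      apply Finset.disjoint_filter_filter'
      rw [disjoint_iff_inf_le]
      rintro p ⟨⟨h1, h2⟩, ⟨h3, h4⟩⟩
      exact h3 h1
    have hb1 : (E.filter (fun p => p.1 ∈ Sj k ∧ p.2 ∉ Sj k)).card = bCount G (Sj k) := by
      rw [hE, bCount, Finset.filter_filter]
    have hb2 : (E.filter (fun p => p.1 ∉ Sj k ∧ p.2 ∈ Sj k)).card
        = (E.filter (fun p => p.1 ∈ Sj k ∧ p.2 ∉ Sj k)).card := by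
      apply Finset.card_bij' (fun p _ => Prod.swap p) (fun p _ => Prod.swap p)
      · intro p hp
        simp only [hE, Finset.mem_filter, Finset.mem_univ, true_and] at hp ⊢
        exact ⟨hp.1.symm, hp.2.2, hp.2.1⟩
      · intro p hp
        simp only [hE, Finset.mem_filter, Finset.mem_univ, true_and] at hp ⊢
        exact ⟨hp.1.symm, hp.2.2, hp.2.1⟩
      · intro p _; simp
      · intro p _; simp
    rw [hsplit, Finset.card_union_of_disjoint hdisj, hb1, hb2, hb1]
    omega
  -- termwise lower bound
  have termwise : ∀ k ∈ Finset.range N,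
      (s k - s (k+1)) * (2 * (c * (k+1)))
        ≤ (s k - s (k+1)) * ((E.filter (fun p => ¬ (r p.1 ≤ k ↔ r p.2 ≤ k))).card : ℝ) := by
    intro k hk
    rw [Finset.mem_range] at hk
    rcases eq_or_lt_of_le (s_anti (Nat.le_succ k)) with heq | hlt
    · rw [← heq]; simp
    · have hSne : (Sj k).Nonempty := ⟨τ ⟨0, hN⟩, mem_Sj.mpr (by
        have : r (τ ⟨0, hN⟩) = 0 := by simp [hrdef]
        omega)⟩
      have hcard : (Sj k).card = k + 1 := card_Sj hk
      have hsub : Sj k ⊆ univ.filter (fun i => 0 < z i) := by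
        intro u hu
        rw [mem_Sj] at hu
        rw [Finset.mem_filter]
        refine ⟨Finset.mem_univ _, ?_⟩
        rw [z_eq u]
        calc (0:ℝ) ≤ s (k+1) := s_nonneg _
        _ < s k := hlt
        _ ≤ s (r u) := s_anti hu
      have hhalf : ((Sj k).card : ℝ) ≤ (N : ℝ)/2 :=
        le_trans (by exact_mod_cast Nat.cast_le.mpr (Finset.card_le_card hsub)) hsupp
      have hbc := hc (Sj k) hSne hhalf
      rw [cross_eq k]
      apply mul_le_mul_of_nonneg_left _ (by linarith)
      rw [hcard] at hbc
      push_cast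
      push_cast at hbc
      linarith
  -- Abel summation
  have abel : ∑ k ∈ Finset.range N, (s k - s (k+1)) * (2 * (c * (k+1)))
      = 2 * c * ∑ i, z i := by
    have h1 : ∀ k, (s k - s (k+1)) * (2 * (c * (k+1)))
        = 2 * c * (s k + ((k : ℝ) * s k - ((k:ℝ)+1) * s (k+1))) := by
      intro k; ring
    simp only [h1]
    rw [← Finset.mul_sum]
    congr 1
    rw [Finset.sum_add_distrib]
    have h2 : ∑ k ∈ Finset.range N, ((k : ℝ) * s k - ((k:ℝ)+1) * s (k+1)) = 0 := by
      have := Finset.sum_range_sub' (fun k => (k : ℝ) * s k) N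
      simp only [Nat.cast_add, Nat.cast_one] at this ⊢
      rw [this]
      have hsN : s N = 0 := by simp [hs]
      rw [hsN]
      ring
    rw [h2, add_zero]
    rw [Finset.sum_range fun k => s k]
    apply Finset.sum_nbij' (fun k : Fin N => τ k) (fun u => τ.symm u) <;> intros <;>
      simp [s_apply, Fin.eta]
  -- conclude
  rw [lhs_eq, total]
  rw [← abel]
  exact Finset.sum_le_sum termwise



end coarea

section graph
variable {N : ℕ} {G : SimpleGraph (Fin N)} [DecidableRel G.Adj] {d : ℕ} {v : Fin N}

lemma lapHerm : (G.lapMatrix ℝ).IsHermitian := (SimpleGraph.posSemidef_lapMatrix ℝ G).1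

lemma lap_qform (x : Fin N → ℝ) : x ⬝ᵥ (G.lapMatrix ℝ *ᵥ x)
    = (∑ i, ∑ j, if G.Adj i j then (x i - x j)^2 else 0) / 2 := by
  rw [← SimpleGraph.lapMatrix_toLinearMap₂' ℝ G x, Matrix.toLinearMap₂'_apply']

lemma lap_qform_nonneg (x : Fin N → ℝ) : 0 ≤ x ⬝ᵥ (G.lapMatrix ℝ *ᵥ x) := by
  rw [lap_qform]; positivity

lemma lap_rowsum (i : Fin N) : ∑ j, G.lapMatrix ℝ i j = 0 := by
  have h := congrFun (G.lapMatrix_mulVec_const_eq_zero (R := ℝ)) i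
  simpa [Matrix.mulVec, dotProduct] using h

lemma lap_colsum (j : Fin N) : ∑ i, G.lapMatrix ℝ i j = 0 := by
  have h : ∀ i, G.lapMatrix ℝ i j = G.lapMatrix ℝ j i := fun i => (G.isSymm_lapMatrix (R := ℝ)).apply j i
  simp only [h]
  exact lap_rowsum j

lemma lap_diag (u : Fin N) : G.lapMatrix ℝ u u = G.degree u := by
  simp [SimpleGraph.lapMatrix, SimpleGraph.degMatrix, SimpleGraph.adjMatrix]

lemma lap_offdiag {u w : Fin N} (h : u ≠ w) :
    G.lapMatrix ℝ u w = if G.Adj u w then -1 else 0 := by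
  simp only [SimpleGraph.lapMatrix, SimpleGraph.degMatrix, SimpleGraph.adjMatrix,
    Matrix.sub_apply, Matrix.diagonal_apply_ne _ h, Matrix.of_apply]
  split <;> norm_num

lemma lap_rayleigh_le (hreg : ∀ u, G.degree u = d) (x : Fin N → ℝ) :
    x ⬝ᵥ (G.lapMatrix ℝ *ᵥ x) ≤ 2 * d * (x ⬝ᵥ x) := by
  rw [lap_qform]
  have hx2 : x ⬝ᵥ x = ∑ i, x i ^ 2 := by
    simp [dotProduct, sq]
  have step1 : (∑ i, ∑ j, if G.Adj i j then (x i - x j)^2 else 0)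
      ≤ ∑ i, ∑ j, if G.Adj i j then 2 * x i^2 + 2 * x j^2 else 0 := by
    apply Finset.sum_le_sum; intro i _
    apply Finset.sum_le_sum; intro j _
    split
    · nlinarith [sq_nonneg (x i + x j)]
    · exact le_refl 0
  have hA : (∑ i, ∑ j, if G.Adj i j then 2 * x i^2 else 0) = 2 * d * ∑ i, x i ^2 := by
    have : ∀ i, (∑ j, if G.Adj i j then 2 * x i^2 else 0) = 2 * x i^2 * G.degree i := by
      intro i
      rw [SimpleGraph.degree_eq_sum_if_adj (G := G) (R := ℝ) i, Finset.mul_sum]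
      apply Finset.sum_congr rfl
      intro j _
      split <;> ring
    simp only [this, hreg]
    rw [Finset.mul_sum]
    apply Finset.sum_congr rfl
    intro i _; ring
  have hB : (∑ i, ∑ j, if G.Adj i j then 2 * x j^2 else 0) = 2 * d * ∑ i, x i ^2 := by
    rw [Finset.sum_comm]
    rw [← hA]
    apply Finset.sum_congr rfl; intro j _
    apply Finset.sum_congr rfl; intro i _
    rw [if_congr (G.adj_comm j i) rfl rfl]
  have split2 : (∑ i, ∑ j, if G.Adj i j then 2 * x i^2 + 2 * x j^2 else 0)
      = (∑ i, ∑ j, if G.Adj i j then 2 * x i^2 else 0)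
        + (∑ i, ∑ j, if G.Adj i j then 2 * x j^2 else 0) := by
    rw [← Finset.sum_add_distrib]
    apply Finset.sum_congr rfl; intro i _
    rw [← Finset.sum_add_distrib]
    apply Finset.sum_congr rfl; intro j _
    split <;> simp
  rw [hx2]
  rw [split2, hA, hB] at step1
  linarith

end graph

section groundsec
variable {N : ℕ} {G : SimpleGraph (Fin N)} [DecidableRel G.Adj] {v : Fin N}

lemma sum_ne (v : Fin N) (f : Fin N → ℝ) :
    ∑ i : {i : Fin N // i ≠ v}, f i.1 = (∑ i, f i) - f v := by
  classical
  have h1 : ∑ i ∈ Finset.univ.erase v, f i = ∑ i : {i : Fin N // i ≠ v}, f i.1 := by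
    apply Finset.sum_subtype
    intro x
    simp [Finset.mem_erase]
  have h2 := Finset.sum_erase_add Finset.univ f (Finset.mem_univ v)
  rw [← h1]
  linarith

lemma groundHerm {M : Matrix (Fin N) (Fin N) ℝ} (hM : M.IsHermitian) (v : Fin N) :
    (ground M v).IsHermitian := by
  ext i j
  rw [Matrix.conjTranspose_apply]
  exact hM.apply i.1 j.1

/-- extension by zero -/
def ext0 (v : Fin N) (x : {i : Fin N // i ≠ v} → ℝ) : Fin N → ℝ :=
  fun i => if h : i = v then 0 else x ⟨i, h⟩

lemma ext0_v (v : Fin N) (x : {i : Fin N // i ≠ v} → ℝ) : ext0 v x v = 0 := by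
  simp [ext0]

lemma ext0_ne (v : Fin N) (x : {i : Fin N // i ≠ v} → ℝ) (i : {i : Fin N // i ≠ v}) :
    ext0 v x i.1 = x i := by
  simp [ext0, i.2]

lemma ground_qform (M : Matrix (Fin N) (Fin N) ℝ) (v : Fin N) (x : {i : Fin N // i ≠ v} → ℝ) :
    x ⬝ᵥ (ground M v *ᵥ x) = ext0 v x ⬝ᵥ (M *ᵥ ext0 v x) := by
  have hmv : ∀ i : Fin N, (M *ᵥ ext0 v x) i = ∑ j : {j : Fin N // j ≠ v}, M i j.1 * x j := by
    intro i
    have h := sum_ne v (fun j => M i j * ext0 v x j)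
    simp only [ext0_v, mul_zero, sub_zero] at h
    rw [Matrix.mulVec, dotProduct, ← h]
    exact Finset.sum_congr rfl (fun j _ => by rw [ext0_ne])
  have h2 := sum_ne v (fun i => ext0 v x i * (M *ᵥ ext0 v x) i)
  simp only [ext0_v, zero_mul, sub_zero] at h2
  rw [dotProduct, dotProduct, ← h2]
  apply Finset.sum_congr rfl
  intro i _
  rw [ext0_ne, hmv]
  congr 1

lemma ground_psd (v : Fin N) (x : {i : Fin N // i ≠ v} → ℝ) :
    0 ≤ x ⬝ᵥ (ground (G.lapMatrix ℝ) v *ᵥ x) := by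
  rw [ground_qform]
  exact lap_qform_nonneg _

lemma ground_ones (v : Fin N) :
    (fun _ => (1:ℝ)) ⬝ᵥ (ground (G.lapMatrix ℝ) v *ᵥ (fun _ => (1:ℝ)))
      = G.degree v := by
  have hrow : ∀ i : {i : Fin N // i ≠ v},
      (ground (G.lapMatrix ℝ) v *ᵥ (fun _ => (1:ℝ))) i = - G.lapMatrix ℝ i.1 v := by
    intro i
    have h := sum_ne v (fun j => G.lapMatrix ℝ i.1 j * 1)
    simp only [mul_one] at h
    rw [lap_rowsum] at h
    rw [Matrix.mulVec, dotProduct]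
    simp only [mul_one] at h ⊢
    rw [show (∑ j : {j : Fin N // j ≠ v}, ground (G.lapMatrix ℝ) v i j)
      = ∑ j : {j : Fin N // j ≠ v}, G.lapMatrix ℝ i.1 j.1 from rfl, h]
    ring
  rw [dotProduct]
  simp only [hrow, one_mul]
  have h2 := sum_ne v (fun i => - G.lapMatrix ℝ i v)
  rw [h2]
  have h3 : ∑ i, - G.lapMatrix ℝ i v = 0 := by
    have h4 : ∑ i, - G.lapMatrix ℝ i v = - ∑ i, G.lapMatrix ℝ i v := by
      rw [Finset.sum_neg_distrib]
    rw [h4, lap_colsum, neg_zero]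
  rw [h3, lap_diag]
  ring

lemma ground_single (u : {i : Fin N // i ≠ v}) :
    Pi.single u (1:ℝ) ⬝ᵥ (ground (G.lapMatrix ℝ) v *ᵥ Pi.single u (1:ℝ))
      = G.degree u.1 := by
  rw [dotProduct]
  rw [Finset.sum_eq_single u]
  · rw [Pi.single_eq_same, one_mul, Matrix.mulVec, dotProduct, Finset.sum_eq_single u]
    · rw [Pi.single_eq_same, mul_one]
      exact lap_diag u.1
    · intro b _ hb
      rw [Pi.single_eq_of_ne hb, mul_zero]
    · intro h; exact absurd (Finset.mem_univ u) h
  · intro b _ hb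
    rw [Pi.single_eq_of_ne hb, zero_mul]
  · intro h; exact absurd (Finset.mem_univ u) h

end groundsec



section lambda2
open Finset
variable {N : ℕ} {G : SimpleGraph (Fin N)} [DecidableRel G.Adj]

lemma sum_adj_two_sq {d : ℕ} (hreg : ∀ u, G.degree u = d) (w : Fin N → ℝ) :
    (∑ i, ∑ j, if G.Adj i j then 2 * w i^2 + 2 * w j^2 else 0) = 4 * d * ∑ i, w i ^2 := by
  have hA : (∑ i, ∑ j, if G.Adj i j then 2 * w i^2 else 0) = 2 * d * ∑ i, w i ^2 := by
    have h : ∀ i, (∑ j, if G.Adj i j then 2 * w i^2 else 0) = 2 * w i^2 * G.degree i := by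
      intro i
      rw [SimpleGraph.degree_eq_sum_if_adj (G := G) (R := ℝ) i, Finset.mul_sum]
      apply Finset.sum_congr rfl
      intro j _
      split <;> ring
    simp only [h, hreg]
    rw [Finset.mul_sum]
    apply Finset.sum_congr rfl
    intro i _; ring
  have hB : (∑ i, ∑ j, if G.Adj i j then 2 * w j^2 else 0) = 2 * d * ∑ i, w i ^2 := by
    rw [Finset.sum_comm, ← hA]
    apply Finset.sum_congr rfl; intro j _
    apply Finset.sum_congr rfl; intro i _
    rw [if_congr (G.adj_comm j i) rfl rfl]
  have split2 : (∑ i, ∑ j, if G.Adj i j then 2 * w i^2 + 2 * w j^2 else 0)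
      = (∑ i, ∑ j, if G.Adj i j then 2 * w i^2 else 0)
        + (∑ i, ∑ j, if G.Adj i j then 2 * w j^2 else 0) := by
    rw [← Finset.sum_add_distrib]
    apply Finset.sum_congr rfl; intro i _
    rw [← Finset.sum_add_distrib]
    apply Finset.sum_congr rfl; intro j _
    split <;> simp
  rw [split2, hA, hB]; ring

lemma lambda2_lower {c : ℝ} {d : ℕ} {lam : ℝ}
    (hN : 0 < N) (hd : 1 ≤ d) (hc : 0 < c)
    (hcheeg : ∀ X : Finset (Fin N), X.Nonempty → (X.card : ℝ) ≤ (N:ℝ)/2 →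
      c * X.card ≤ (bCount G X : ℝ))
    (hreg : ∀ u, G.degree u = d)
    (x : Fin N → ℝ) (hx : G.lapMatrix ℝ *ᵥ x = lam • x)
    (hPne : (univ.filter fun i => 0 < x i).Nonempty)
    (hPcard : ((univ.filter fun i => 0 < x i).card : ℝ) ≤ (N:ℝ)/2) :
    c^2 / (2*d) ≤ lam := by
  classical
  set y : Fin N → ℝ := fun i => max (x i) 0 with hy
  have hy0 : ∀ i, 0 ≤ y i := fun i => le_max_right _ _
  set z : Fin N → ℝ := fun i => y i ^ 2 with hz
  have hz0 : ∀ i, 0 ≤ z i := fun i => sq_nonneg _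
  set S := ∑ i, z i with hS
  have hfilter : (univ.filter fun i => 0 < z i) = (univ.filter fun i => 0 < x i) := by
    apply Finset.filter_congr
    intro i _
    simp only [hz, hy]
    constructor
    · intro h
      rcases le_or_gt (x i) 0 with h1 | h1
      · rw [max_eq_right h1] at h; simp at h
      · exact h1
    · intro h
      rw [max_eq_left (le_of_lt h)]
      exact pow_pos h 2
  have hSpos : 0 < S := by
    obtain ⟨i0, hi0⟩ := hPne
    rw [Finset.mem_filter] at hi0
    apply Finset.sum_pos' (fun i _ => hz0 i)
    refine ⟨i0, Finset.mem_univ _, ?_⟩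
    simp only [hz, hy]
    rw [max_eq_left (le_of_lt hi0.2)]
    exact pow_pos hi0.2 2
  -- Claim 1 : y L y ≤ lam * S
  have hyLy_nonneg : 0 ≤ y ⬝ᵥ (G.lapMatrix ℝ *ᵥ y) := lap_qform_nonneg y
  have claim1 : y ⬝ᵥ (G.lapMatrix ℝ *ᵥ y) ≤ lam * S := by
    rw [dotProduct, hS, Finset.mul_sum]
    apply Finset.sum_le_sum
    intro i _
    rcases le_or_gt (x i) 0 with h1 | h1
    · have hyi : y i = 0 := max_eq_right h1
      rw [hyi, zero_mul]
      have : z i = 0 := by rw [hz]; simp [hyi]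
      rw [this, mul_zero]
    · have hyi : y i = x i := max_eq_left (le_of_lt h1)
      have hLyx : (G.lapMatrix ℝ *ᵥ y) i ≤ (G.lapMatrix ℝ *ᵥ x) i := by
        rw [Matrix.mulVec, Matrix.mulVec, dotProduct, dotProduct]
        apply Finset.sum_le_sum
        intro j _
        rcases eq_or_ne j i with rfl | hne
        · rw [hyi]
        · have hoff : G.lapMatrix ℝ i j ≤ 0 := by
            rw [lap_offdiag (Ne.symm hne)]
            split <;> norm_num
          have : x j ≤ y j := le_max_left _ _
          exact mul_le_mul_of_nonpos_left this hoff
      have hLx : (G.lapMatrix ℝ *ᵥ x) i = lam * x i := by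
        rw [hx]; rfl
      have hz_i : z i = x i * x i := by rw [hz]; simp [hyi]; ring
      calc y i * (G.lapMatrix ℝ *ᵥ y) i ≤ y i * (G.lapMatrix ℝ *ᵥ x) i := by
            apply mul_le_mul_of_nonneg_left hLyx (hy0 i)
        _ = x i * (lam * x i) := by rw [hyi, hLx]
        _ = lam * z i := by rw [hz_i]; ring
  have hlam0 : 0 ≤ lam := by
    nlinarith
  -- Claim 2 : coarea
  have claim2 : 2 * c * S ≤ ∑ i, ∑ j, if G.Adj i j then |z i - z j| else 0 :=
    coarea hN hcheeg z hz0 (by rw [hfilter]; exact hPcard)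
  -- Cauchy-Schwarz
  set F := ∑ i, ∑ j, if G.Adj i j then |z i - z j| else 0 with hF
  set Q := ∑ i, ∑ j, if G.Adj i j then (y i - y j)^2 else 0 with hQ
  set R := ∑ i, ∑ j, if G.Adj i j then (y i + y j)^2 else 0 with hR
  have hQnn : 0 ≤ Q := by
    rw [hQ]; positivity
  have hRnn : 0 ≤ R := by
    rw [hR]; positivity
  have hFQR : F^2 ≤ Q * R := by
    have hprod : ∀ p : Fin N × Fin N,
        (if G.Adj p.1 p.2 then |y p.1 - y p.2| else 0)
          * (if G.Adj p.1 p.2 then (y p.1 + y p.2) else 0)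
        = if G.Adj p.1 p.2 then |z p.1 - z p.2| else 0 := by
      intro p
      split
      · rw [hz]
        have h1 : |y p.1 ^2 - y p.2 ^2| = |y p.1 - y p.2| * |y p.1 + y p.2| := by
          rw [← abs_mul]; ring_nf
        have h2 : |y p.1 + y p.2| = y p.1 + y p.2 :=
          abs_of_nonneg (by have := hy0 p.1; have := hy0 p.2; linarith)
        rw [h1, h2]
      · ring
    have hcs := Finset.sum_mul_sq_le_sq_mul_sq (univ ×ˢ univ)
      (fun p : Fin N × Fin N => if G.Adj p.1 p.2 then |y p.1 - y p.2| else 0)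
      (fun p : Fin N × Fin N => if G.Adj p.1 p.2 then (y p.1 + y p.2) else 0)
    have e1 : ∑ p ∈ univ ×ˢ univ,
        (if G.Adj p.1 p.2 then |y p.1 - y p.2| else 0)
          * (if G.Adj p.1 p.2 then (y p.1 + y p.2) else 0) = F := by
      rw [hF]
      rw [Finset.sum_product]
      exact Finset.sum_congr rfl fun i _ => Finset.sum_congr rfl fun j _ => hprod (i, j)
    have e2 : ∑ p ∈ univ ×ˢ univ,
        (if G.Adj p.1 p.2 then |y p.1 - y p.2| else 0)^2 = Q := by
      rw [hQ, Finset.sum_product]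
      apply Finset.sum_congr rfl; intro i _
      apply Finset.sum_congr rfl; intro j _
      split
      · rw [sq_abs]
      · simp
    have e3 : ∑ p ∈ univ ×ˢ univ,
        (if G.Adj p.1 p.2 then (y p.1 + y p.2) else 0)^2 = R := by
      rw [hR, Finset.sum_product]
      apply Finset.sum_congr rfl; intro i _
      apply Finset.sum_congr rfl; intro j _
      split
      · rfl
      · simp
    rw [e1, e2, e3] at hcs
    exact hcs
  have hQle : Q ≤ 2 * lam * S := by
    have := lap_qform (G := G) y
    rw [← hQ] at this
    nlinarith
  have hRle : R ≤ 4 * d * S := by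
    have hbound : R ≤ ∑ i, ∑ j, if G.Adj i j then 2 * y i^2 + 2 * y j^2 else 0 := by
      rw [hR]
      apply Finset.sum_le_sum; intro i _
      apply Finset.sum_le_sum; intro j _
      split
      · nlinarith [sq_nonneg (y i - y j)]
      · exact le_refl 0
    rw [sum_adj_two_sq hreg y] at hbound
    have : ∑ i, y i ^ 2 = S := by
      rw [hS]
    rw [this] at hbound
    exact hbound
  -- combine
  have hd0 : (0:ℝ) < d := by exact_mod_cast hd
  have hkey : (2*c*S)^2 ≤ (2*lam*S) * (4*d*S) := by
    calc (2*c*S)^2 ≤ F^2 := by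
          have h2cS : 0 ≤ 2*c*S := by positivity
          nlinarith
      _ ≤ Q * R := hFQR
      _ ≤ (2*lam*S) * (4*d*S) := by nlinarith
  rw [div_le_iff₀ (by positivity)]
  nlinarith [mul_pos hSpos hSpos, hkey]

end lambda2


lemma pos_neg_nonempty {N : ℕ} (x : Fin N → ℝ) (hsum : ∑ i, x i = 0) {i1 : Fin N}
    (hne : x i1 ≠ 0) :
    (univ.filter fun i => 0 < x i).Nonempty ∧ (univ.filter fun i => x i < 0).Nonempty := by
  classical
  constructor
  · by_contra hP
    rw [Finset.not_nonempty_iff_eq_empty, Finset.filter_eq_empty_iff] at hP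
    have hle : ∀ i ∈ univ, x i ≤ 0 := fun i hi => not_lt.mp (hP hi)
    have hlt : x i1 < 0 := lt_of_le_of_ne (hle i1 (Finset.mem_univ _)) hne
    have h2 : ∑ i, x i < ∑ _i : Fin N, (0:ℝ) :=
      Finset.sum_lt_sum hle ⟨i1, Finset.mem_univ _, hlt⟩
    rw [hsum] at h2
    simp at h2
  · by_contra hP
    rw [Finset.not_nonempty_iff_eq_empty, Finset.filter_eq_empty_iff] at hP
    have hle : ∀ i ∈ univ, (0:ℝ) ≤ x i := fun i hi => not_lt.mp (hP hi)
    have hlt : 0 < x i1 := lt_of_le_of_ne (hle i1 (Finset.mem_univ _)) (Ne.symm hne)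
    have h2 : ∑ _i : Fin N, (0:ℝ) < ∑ i, x i :=
      Finset.sum_lt_sum hle ⟨i1, Finset.mem_univ _, hlt⟩
    rw [hsum] at h2
    simp at h2

/-- For constants `d ≥ 1` and `c > 0`, there is a network size `N̄`
such that for every `N > N̄`, every connected `d`-regular simple graph on `N`
vertices with Cheeger constant at least `c`, and every grounded vertex `v`, the
eigenratio `λ₂/λ_N` of the Laplacian strictly exceeds the grounded eigenratio
`λ̄₁/λ̄_{N-1}` of the grounded Laplacian. -/
theorem grounded_eigenratio_lt_eigenratio_eventually
    (d : ℕ) (hd : 1 ≤ d) (c : ℝ) (hc : 0 < c) :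
    ∃ Nbar : ℕ, ∀ N : ℕ, N > Nbar →
      ∀ G : SimpleGraph (Fin N), G.Connected → (∀ u, deg G u = d) → c ≤ cheeger G →
        ∀ v : Fin N,
          eigVal (lap G) 1 / eigVal (lap G) (N - 1) >
            eigVal (ground (lap G) v) 0 / eigVal (ground (lap G) v) (N - 2) := by
  classical
  refine ⟨⌈4*(d:ℝ)^2/c^2⌉₊ + 2, ?_⟩
  intro N hNbig G hconn hreg' hch v
  have hN3 : 3 ≤ N := by omega
  have hd0 : (0:ℝ) < d := by exact_mod_cast hd
  have hNineq : (4*(d:ℝ)^2/c^2) < (N:ℝ) - 1 := by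
    have h1 : (4*(d:ℝ)^2/c^2) ≤ (⌈4*(d:ℝ)^2/c^2⌉₊ : ℝ) := Nat.le_ceil _
    have h2 : ((⌈4*(d:ℝ)^2/c^2⌉₊ + 3 : ℕ) : ℝ) ≤ (N : ℝ) := by exact_mod_cast hNbig
    push_cast at h2
    linarith
  have hlap : lap G = G.lapMatrix ℝ := rfl
  have hreg : ∀ u, G.degree u = d := by
    intro u
    rw [← hreg' u]
    rw [SimpleGraph.degree, SimpleGraph.neighborFinset_eq_filter]
    rfl
  set L := G.lapMatrix ℝ with hLdef
  have hL : L.IsHermitian := lapHerm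
  have cardFin : Fintype.card (Fin N) = N := Fintype.card_fin N
  have h1card : 1 < Fintype.card (Fin N) := by rw [cardFin]; omega
  have h0card : 0 < Fintype.card (Fin N) := by omega
  have hNm1card : N - 1 < Fintype.card (Fin N) := by rw [cardFin]; omega
  -- cheeger hypothesis in boundary-count form
  have hcheeg : ∀ X : Finset (Fin N), X.Nonempty → (X.card : ℝ) ≤ (N:ℝ)/2 →
      c * X.card ≤ (bCount G X : ℝ) := by
    intro X hXne hXc
    have hXpos : (0:ℝ) < X.card := by
      exact_mod_cast Finset.card_pos.mpr hXne
    have hbdd : BddBelow {r : ℝ | ∃ X' : Finset (Fin N), X'.Nonempty ∧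
        (X'.card : ℝ) ≤ (N:ℝ)/2 ∧
        r = ((Finset.univ.filter fun p : Fin N × Fin N =>
          G.Adj p.1 p.2 ∧ p.1 ∈ X' ∧ p.2 ∉ X').card : ℝ) / X'.card} := by
      refine ⟨0, ?_⟩
      rintro r ⟨X', -, -, rfl⟩
      positivity
    have hle : cheeger G ≤ ((Finset.univ.filter fun p : Fin N × Fin N =>
        G.Adj p.1 p.2 ∧ p.1 ∈ X ∧ p.2 ∉ X).card : ℝ) / X.card :=
      csInf_le hbdd ⟨X, hXne, hXc, rfl⟩
    have hc2 := le_trans hch hle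
    rw [le_div_iff₀ hXpos] at hc2
    have hcard_eq : ((Finset.univ.filter fun p : Fin N × Fin N =>
        G.Adj p.1 p.2 ∧ p.1 ∈ X ∧ p.2 ∉ X).card : ℝ) = (bCount G X : ℝ) := by
      norm_cast
    rw [hcard_eq] at hc2
    exact hc2
  -- the second eigenvalue and its eigenvector
  set lam2 := eigVal L 1 with hlam2def
  set x := sevec hL ⟨1, h1card⟩ with hxdef
  have hx : L *ᵥ x = lam2 • x := mulVec_sevec hL h1card
  have hxx : x ⬝ᵥ x = 1 := sevec_dot_self hL _
  have hlam2ray : lam2 = x ⬝ᵥ (L *ᵥ x) := eigVal_eq_rayleigh hL h1card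
  have hlam2nn : 0 ≤ lam2 := hlam2ray ▸ lap_qform_nonneg x
  have i0 : Fin N := ⟨0, by omega⟩
  have hlam2ne : lam2 ≠ 0 := by
    intro h0eq
    have heig00 : 0 ≤ eigVal L 0 := by
      rw [eigVal_eq_rayleigh hL h0card]
      exact lap_qform_nonneg _
    have heig0 : eigVal L 0 = 0 :=
      le_antisymm (h0eq ▸ eigVal_mono hL (Nat.zero_le 1) h1card) heig00
    set x0 := sevec hL ⟨0, h0card⟩ with hx0def
    have hx0 : L *ᵥ x0 = 0 := by
      rw [mulVec_sevec hL h0card, heig0, zero_smul]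
    have hx1 : L *ᵥ x = 0 := by rw [hx, h0eq, zero_smul]
    have hc0 : ∀ i j : Fin N, x0 i = x0 j := by
      intro i j
      refine (G.lapMatrix_mulVec_eq_zero_iff_forall_reachable (x := x0)).mp ?_ i j
        (hconn.preconnected i j)
      exact hx0
    have hc1 : ∀ i j : Fin N, x i = x j := by
      intro i j
      refine (G.lapMatrix_mulVec_eq_zero_iff_forall_reachable (x := x)).mp ?_ i j
        (hconn.preconnected i j)
      exact hx1
    have hdot : x ⬝ᵥ x0 = 0 := by
      apply sevec_dot_ne hL
      intro hcon
      rw [Fin.mk.injEq] at hcon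
      omega
    have hxxc : x ⬝ᵥ x = (N:ℝ) * (x i0 * x i0) := by
      rw [dotProduct]
      rw [Finset.sum_congr rfl (fun i _ => by rw [hc1 i i0])]
      rw [Finset.sum_const, Finset.card_univ, cardFin, nsmul_eq_mul]
    have hx0x0 : x0 ⬝ᵥ x0 = (N:ℝ) * (x0 i0 * x0 i0) := by
      rw [dotProduct]
      rw [Finset.sum_congr rfl (fun i _ => by rw [hc0 i i0])]
      rw [Finset.sum_const, Finset.card_univ, cardFin, nsmul_eq_mul]
    have hxx0 : x ⬝ᵥ x0 = (N:ℝ) * (x i0 * x0 i0) := by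
      rw [dotProduct]
      rw [Finset.sum_congr rfl (fun i _ => by rw [hc1 i i0, hc0 i i0])]
      rw [Finset.sum_const, Finset.card_univ, cardFin, nsmul_eq_mul]
    have h10 : x0 ⬝ᵥ x0 = 1 := sevec_dot_self hL _
    rw [hxxc] at hxx
    rw [hx0x0] at h10
    rw [hxx0] at hdot
    nlinarith
  -- sum of entries of x is zero
  have hsum : ∑ i, x i = 0 := by
    have h1 : ∑ i, (L *ᵥ x) i = 0 := by
      simp only [Matrix.mulVec, dotProduct]
      rw [Finset.sum_comm]
      apply Finset.sum_eq_zero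
      intro j _
      rw [← Finset.sum_mul, lap_colsum, zero_mul]
    have h2 : ∑ i, (L *ᵥ x) i = lam2 * ∑ i, x i := by
      rw [hx]
      simp only [Pi.smul_apply, smul_eq_mul]
      rw [Finset.mul_sum]
    rw [h2] at h1
    rcases mul_eq_zero.mp h1 with h | h
    · exact absurd h hlam2ne
    · exact h
  have hxne0 : ∃ i, x i ≠ 0 := by
    by_contra hall
    push_neg at hall
    have : x ⬝ᵥ x = 0 := by simp [dotProduct, hall]
    rw [hxx] at this
    norm_num at this
  obtain ⟨i1, hi1⟩ := hxne0
  obtain ⟨hPne, hQne⟩ := pos_neg_nonempty x hsum hi1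
  -- lower bound on lam2
  have hNpos : 0 < N := by omega
  have hlow : c^2/(2*(d:ℝ)) ≤ lam2 := by
    rcases le_or_gt (((univ.filter fun i => 0 < x i).card : ℝ)) ((N:ℝ)/2) with hsmall | hbig
    · exact lambda2_lower hNpos hd hc hcheeg hreg x hx hPne hsmall
    · have hx' : L *ᵥ (-x) = lam2 • (-x) := by
        rw [Matrix.mulVec_neg, hx, smul_neg]
      have hQP : (univ.filter fun i => 0 < (-x) i) = (univ.filter fun i => x i < 0) := by
        apply Finset.filter_congr
        intro i _
        simp [neg_pos]
      have hdisj : Disjoint (univ.filter fun i => 0 < x i) (univ.filter fun i => x i < 0) := by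
        rw [Finset.disjoint_left]
        intro a ha hb
        rw [Finset.mem_filter] at ha hb
        linarith [ha.2, hb.2]
      have hunion : (univ.filter fun i => 0 < x i).card
          + (univ.filter fun i => x i < 0).card ≤ N := by
        rw [← Finset.card_union_of_disjoint hdisj]
        calc ((univ.filter fun i => 0 < x i) ∪ (univ.filter fun i => x i < 0)).card
            ≤ (univ : Finset (Fin N)).card := Finset.card_le_univ _
          _ = N := by rw [Finset.card_univ, cardFin]
      have hQcard : (((univ.filter fun i => 0 < (-x) i)).card : ℝ) ≤ (N:ℝ)/2 := by
        rw [hQP]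
        have : ((univ.filter fun i => 0 < x i).card : ℝ)
            + ((univ.filter fun i => x i < 0).card : ℝ) ≤ (N:ℝ) := by
          exact_mod_cast hunion
        linarith
      have hQne' : (univ.filter fun i => 0 < (-x) i).Nonempty := by
        rw [hQP]; exact hQne
      exact lambda2_lower hNpos hd hc hcheeg hreg (-x) hx' hQne' hQcard
  have hlam2pos : 0 < lam2 := lt_of_lt_of_le (by positivity) hlow
  -- largest eigenvalue
  set lamN := eigVal L (N-1) with hlamNdef
  have hmono21 : lam2 ≤ lamN := eigVal_mono hL (by omega) hNm1card
  have hlamNpos : 0 < lamN := lt_of_lt_of_le hlam2pos hmono21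
  have hlamNle : lamN ≤ 2*(d:ℝ) := by
    have h1 := eigVal_eq_rayleigh hL hNm1card
    have h2 := lap_rayleigh_le hreg (sevec hL ⟨N-1, hNm1card⟩)
    rw [sevec_dot_self hL] at h2
    rw [hlamNdef, h1]
    linarith
  -- grounded Laplacian
  set Mg := ground L v with hMgdef
  have hMg : Mg.IsHermitian := groundHerm hL v
  have cardsub : Fintype.card {i : Fin N // i ≠ v} = N - 1 := by
    simp [Fintype.card_subtype_compl]
  have hsubpos : 0 < Fintype.card {i : Fin N // i ≠ v} := by rw [cardsub]; omega
  have mu1nn : 0 ≤ eigVal Mg 0 := by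
    rw [eigVal_eq_rayleigh hMg hsubpos]
    exact ground_psd v _
  have hNm1R : (0:ℝ) < (N:ℝ) - 1 := by
    have : (3:ℝ) ≤ (N:ℝ) := by exact_mod_cast hN3
    linarith
  have mu1le : eigVal Mg 0 * ((N:ℝ)-1) ≤ (d:ℝ) := by
    have h1 := eigVal_min_rayleigh hMg hsubpos (fun _ => (1:ℝ))
    have h2 : (fun _ => (1:ℝ)) ⬝ᵥ (fun (_ : {i : Fin N // i ≠ v}) => (1:ℝ)) = ((N:ℝ)-1) := by
      rw [dotProduct]
      simp only [mul_one]
      rw [Finset.sum_const, Finset.card_univ, cardsub, nsmul_eq_mul]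
      have : ((N - 1 : ℕ) : ℝ) = (N:ℝ) - 1 := by
        rw [Nat.cast_sub (by omega)]
        norm_num
      rw [this, mul_one]
    have h3 := ground_ones (G := G) v
    rw [hreg v] at h3
    rw [h2, h3] at h1
    exact h1
  have mumaxge : (d:ℝ) ≤ eigVal Mg (N-2) := by
    obtain ⟨u, hu⟩ := Fintype.exists_ne_of_one_lt_card (by rw [cardFin]; omega) v
    have h1 := eigVal_max_rayleigh hMg hsubpos (Pi.single ⟨u, hu⟩ (1:ℝ))
    have h2 := ground_single (G := G) (v := v) ⟨u, hu⟩
    have h3 : Pi.single (⟨u, hu⟩ : {i : Fin N // i ≠ v}) (1:ℝ)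
        ⬝ᵥ Pi.single ⟨u, hu⟩ (1:ℝ) = 1 := by
      rw [dotProduct, Finset.sum_eq_single (⟨u, hu⟩ : {i : Fin N // i ≠ v})]
      · simp
      · intro b _ hb
        rw [Pi.single_eq_of_ne hb, zero_mul]
      · intro h; exact absurd (Finset.mem_univ _) h
    rw [cardsub] at h1
    have hidx : N - 1 - 1 = N - 2 := by omega
    rw [hidx] at h1
    rw [h2, hreg u, h3, mul_one] at h1
    exact h1
  have mumaxpos : (0:ℝ) < eigVal Mg (N-2) := lt_of_lt_of_le hd0 mumaxge
  -- final comparison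
  rw [hlap]
  show eigVal (ground L v) 0 / eigVal (ground L v) (N - 2) < eigVal L 1 / eigVal L (N-1)
  have step1 : eigVal Mg 0 / eigVal Mg (N-2) ≤ 1/((N:ℝ)-1) := by
    rw [div_le_div_iff₀ mumaxpos hNm1R]
    calc eigVal Mg 0 * ((N:ℝ)-1) ≤ (d:ℝ) := mu1le
      _ ≤ eigVal Mg (N-2) := mumaxge
      _ = 1 * eigVal Mg (N-2) := by ring
  have step2 : 1/((N:ℝ)-1) < c^2/(4*(d:ℝ)^2) := by
    rw [div_lt_div_iff₀ hNm1R (by positivity)]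
    rw [div_lt_iff₀ (by positivity)] at hNineq
    linarith
  have step3 : c^2/(4*(d:ℝ)^2) ≤ lam2 / lamN := by
    rw [div_le_div_iff₀ (by positivity) hlamNpos]
    rw [div_le_iff₀ (by positivity)] at hlow
    nlinarith
  calc eigVal Mg 0 / eigVal Mg (N-2) ≤ 1/((N:ℝ)-1) := step1
    _ < c^2/(4*(d:ℝ)^2) := step2
    _ ≤ lam2 / lamN := step3
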